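/- arXiv:2101.04554 — 5 statements merged into one kernel-verified Lean document; each statement's English description precedes it below -/
import Mathlib

section
/- Let 0 < α < 1, a_i = (i+1)^{1-α} - i^{1-α}, and p_n defined by p_0 = 1, p_n = Σ_{j=1}^{n}(a_{j-1} - a_j) p_{n-j} for n ≥ 1. Then for all integers n ≥ 1 and 1 ≤ k ≤ n, the complementary convolution identity Σ_{j=k}^{n} p_{n-j} a_{j-k} = 1 holds. -/
noncomputable def L1a (α : ℝ) (i : ℕ) : ℝ := ((i : ℝ) + 1) ^ (1 - α) - (i : ℝ) ^ (1 - α)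

noncomputable def L1p (α : ℝ) : ℕ → ℝ
  | 0 => 1
  | n + 1 => ∑ j : Fin (n + 1), (L1a α j - L1a α (j + 1)) * L1p α (n - j)

/-! The recursion for `p` says exactly that the convolution `c m = ∑_{i ≤ m} p (m - i) a i` satisfies
`c (m + 1) = c m` (move the term `p (m + 1) a 0 = p (m + 1)` to one side), and `c 0 = p 0 a 0 = 1`.
The identity for general `k` is this one with the summation index shifted by `k`. -/

open Finset

lemma L1a_zero {α : ℝ} (hα : α ≠ 1) : L1a α 0 = 1 := by
  rw [L1a, Nat.cast_zero, zero_add, Real.one_rpow, Real.zero_rpow (sub_ne_zero.mpr hα.symm), sub_zero]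

lemma L1p_succ (α : ℝ) (m : ℕ) :
    L1p α (m + 1) = ∑ j ∈ range (m + 1), (L1a α j - L1a α (j + 1)) * L1p α (m - j) := by
  rw [L1p, Fin.sum_univ_eq_sum_range (fun j => (L1a α j - L1a α (j + 1)) * L1p α (m - j))]

lemma sum_range_L1p_mul_L1a {α : ℝ} (hα : α ≠ 1) (m : ℕ) :
    ∑ i ∈ range (m + 1), L1p α (m - i) * L1a α i = 1 := by
  induction m with
  | zero => simp [L1p, L1a_zero hα]
  | succ m ih =>
    rw [sum_range_succ', Nat.sub_zero, L1a_zero hα, mul_one, L1p_succ, ← ih, ← sum_add_distrib]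
    refine sum_congr rfl fun i _ => ?_
    rw [Nat.add_sub_add_right]
    ring

theorem L1p_complementary_general (α : ℝ) (hα1 : α < 1) (n k : ℕ)
    (hkn : k ≤ n) :
    ∑ j ∈ Finset.Icc k n, L1p α (n - j) * L1a α (j - k) = 1 := by
  obtain ⟨m, rfl⟩ := Nat.exists_eq_add_of_le hkn
  rw [← Ico_add_one_right_eq_Icc, sum_Ico_eq_sum_range, Nat.add_assoc, Nat.add_sub_cancel_left,
    ← sum_range_L1p_mul_L1a hα1.ne m]
  refine sum_congr rfl fun i _ => ?_
  rw [Nat.add_sub_add_left, Nat.add_sub_cancel_left]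

theorem L1p_complementary (α : ℝ) (hα0 : 0 < α) (hα1 : α < 1) (n k : ℕ)
    (hk1 : 1 ≤ k) (hkn : k ≤ n) :
    ∑ j ∈ Finset.Icc k n, L1p α (n - j) * L1a α (j - k) = 1 :=
  L1p_complementary_general α hα1 n k hkn
end

section
/- Let 0 < α < 1, a_i = (i+1)^{1-α} - i^{1-α}, and p_n defined by p_0 = 1 and p_n = Σ_{j=1}^{n}(a_{j-1}-a_j)p_{n-j}. Then p_n ≤ (n+1)^{α-1} for all n ≥ 0, with equality at n = 0 (where p_0 = 1) and strict inequality p_n < (n+1)^{α-1} for all n ≥ 1. -/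
namespace L1aux

variable {α : ℝ}

lemma L1a_pos (hα1 : α < 1) (i : ℕ) : 0 < L1a α i := by
  have h : (i : ℝ) ^ (1 - α) < ((i : ℝ) + 1) ^ (1 - α) :=
    Real.rpow_lt_rpow (Nat.cast_nonneg i) (by linarith) (by linarith)
  simpa [L1a] using sub_pos.mpr h

lemma L1a_zero (hα1 : α < 1) : L1a α 0 = 1 := by
  simp [L1a, Real.zero_rpow (by linarith : (1:ℝ) - α ≠ 0), Real.one_rpow]

lemma L1a_int (hα1 : α < 1) (i : ℕ) :
    L1a α i = ∫ t in (i : ℝ)..((i : ℝ) + 1), (1 - α) * t ^ (-α) := by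
  rw [intervalIntegral.integral_const_mul, integral_rpow (Or.inl (by linarith : (-1:ℝ) < -α))]
  have h : -α + 1 = 1 - α := by ring
  rw [h, L1a]
  have h0 : (1:ℝ) - α ≠ 0 := by linarith
  field_simp

lemma rpow_neg_anti (hα0 : 0 < α) {x y : ℝ} (hx : 0 < x) (hxy : x ≤ y) :
    y ^ (-α) ≤ x ^ (-α) := by
  rw [Real.rpow_neg hx.le, Real.rpow_neg (hx.trans_le hxy).le]
  exact inv_anti₀ (Real.rpow_pos_of_pos hx α)
    (Real.rpow_le_rpow hx.le hxy hα0.le)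

lemma L1a_shift_int (hα1 : α < 1) (i : ℕ) :
    L1a α (i + 1) = ∫ t in (i : ℝ)..((i : ℝ) + 1), (1 - α) * (t + 1) ^ (-α) := by
  rw [L1a_int hα1 (i + 1),
    intervalIntegral.integral_comp_add_right (fun t => (1 - α) * t ^ (-α)) 1]
  push_cast
  norm_num

lemma contOn_aux (c : ℝ) (hc : 0 ≤ c) {x y : ℝ} (hx : 0 < x) :
    ContinuousOn (fun t : ℝ => (1 - α) * (t + c) ^ (-α)) (Set.Icc x y) := by
  apply ContinuousOn.mul continuousOn_const
  apply ContinuousOn.rpow_const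
  · exact (continuous_id.add continuous_const).continuousOn
  · intro t ht
    exact Or.inl (by nlinarith [ht.1] : (0:ℝ) < t + c).ne'

/-- (L1): a(i+1) ≤ ((i+2)/(i+1))^(-α) * a(i) -/
lemma L1a_ratio_upper (hα0 : 0 < α) (hα1 : α < 1) (i : ℕ) :
    L1a α (i + 1) ≤ (((i : ℝ) + 2) / ((i : ℝ) + 1)) ^ (-α) * L1a α i := by
  rcases Nat.eq_zero_or_pos i with rfl | hi
  · -- a 1 = 2^(1-α) - 1 ≤ 2^(-α)
    have e1 : L1a α 1 = (2:ℝ) ^ (1 - α) - 1 := by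
      norm_num [L1a, Real.one_rpow]
    have e2 : ((((0:ℕ)):ℝ) + 2) / ((((0:ℕ)):ℝ) + 1) = 2 := by norm_num
    rw [e1, e2, L1a_zero hα1, mul_one]
    have e3 : (2:ℝ) ^ (1 - α) = 2 * (2:ℝ) ^ (-α) := by
      rw [show (1:ℝ) - α = 1 + -α by ring, Real.rpow_add (by norm_num), Real.rpow_one]
    have h4 : (2:ℝ) ^ (-α) ≤ 1 :=
      Real.rpow_le_one_of_one_le_of_nonpos one_le_two (by linarith)
    rw [e3]; linarith
  · have h1 : (1:ℝ) ≤ (i:ℝ) := by exact_mod_cast hi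
    have hle : (i:ℝ) ≤ (i:ℝ) + 1 := by linarith
    rw [L1a_shift_int hα1 i]
    have hC : (0:ℝ) < (((i : ℝ) + 2) / ((i : ℝ) + 1)) := by positivity
    have cmp : (∫ t in (i : ℝ)..((i : ℝ) + 1), (1 - α) * (t + 1) ^ (-α))
        ≤ ∫ t in (i : ℝ)..((i : ℝ) + 1),
            (((i : ℝ) + 2) / ((i : ℝ) + 1)) ^ (-α) * ((1 - α) * (t + 0) ^ (-α)) := by
      apply intervalIntegral.integral_mono_on hle
      · exact (contOn_aux 1 (by norm_num) (by linarith : (0:ℝ) < (i:ℝ))).intervalIntegrable_of_Icc hle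
      · exact (continuousOn_const.mul
          (contOn_aux 0 le_rfl (by linarith : (0:ℝ) < (i:ℝ)))).intervalIntegrable_of_Icc hle
      · intro t ht
        obtain ⟨ht1, ht2⟩ := ht
        have htpos : (0:ℝ) < t := lt_of_lt_of_le (by linarith) ht1
        have hratio : (((i : ℝ) + 2) / ((i : ℝ) + 1)) ≤ (t + 1) / t := by
          rw [div_le_div_iff₀ (by positivity) htpos]
          nlinarith
        have h2 : ((t + 1) / t) ^ (-α) ≤ (((i : ℝ) + 2) / ((i : ℝ) + 1)) ^ (-α) :=
          rpow_neg_anti hα0 hC hratio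
        have h3 : (t + 1) ^ (-α) = ((t + 1) / t) ^ (-α) * t ^ (-α) := by
          rw [← Real.mul_rpow (by positivity) htpos.le, div_mul_cancel₀]
          exact htpos.ne'
        have h5 : (0:ℝ) ≤ t ^ (-α) := Real.rpow_nonneg htpos.le _
        calc (1 - α) * (t + 1) ^ (-α)
            = (1 - α) * (((t + 1) / t) ^ (-α) * t ^ (-α)) := by rw [h3]
          _ ≤ (1 - α) * ((((i : ℝ) + 2) / ((i : ℝ) + 1)) ^ (-α) * t ^ (-α)) := by
              apply mul_le_mul_of_nonneg_left _ (by linarith)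
              exact mul_le_mul_of_nonneg_right h2 h5
          _ = (((i : ℝ) + 2) / ((i : ℝ) + 1)) ^ (-α) * ((1 - α) * (t + 0) ^ (-α)) := by
              rw [add_zero]; ring
    calc (∫ t in (i : ℝ)..((i : ℝ) + 1), (1 - α) * (t + 1) ^ (-α))
        ≤ _ := cmp
      _ = (((i : ℝ) + 2) / ((i : ℝ) + 1)) ^ (-α) * L1a α i := by
          rw [intervalIntegral.integral_const_mul, L1a_int hα1 i]
          simp only [add_zero]

/-- (L2): ((n+1)/n)^(-α) * a(n) ≤ a(n+1), for n ≥ 1 -/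
lemma L1a_ratio_lower (hα0 : 0 < α) (hα1 : α < 1) {n : ℕ} (hn : 1 ≤ n) :
    (((n : ℝ) + 1) / (n : ℝ)) ^ (-α) * L1a α n ≤ L1a α (n + 1) := by
  have h1 : (1:ℝ) ≤ (n:ℝ) := by exact_mod_cast hn
  have hle : (n:ℝ) ≤ (n:ℝ) + 1 := by linarith
  have hC : (0:ℝ) < (((n : ℝ) + 1) / (n : ℝ)) := by positivity
  rw [L1a_shift_int hα1 n]
  have cmp : (∫ t in (n : ℝ)..((n : ℝ) + 1),
        (((n : ℝ) + 1) / (n : ℝ)) ^ (-α) * ((1 - α) * (t + 0) ^ (-α)))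
      ≤ ∫ t in (n : ℝ)..((n : ℝ) + 1), (1 - α) * (t + 1) ^ (-α) := by
    apply intervalIntegral.integral_mono_on hle
    · exact (continuousOn_const.mul
        (contOn_aux 0 le_rfl (by linarith : (0:ℝ) < (n:ℝ)))).intervalIntegrable_of_Icc hle
    · exact (contOn_aux 1 (by norm_num) (by linarith : (0:ℝ) < (n:ℝ))).intervalIntegrable_of_Icc hle
    · intro t ht
      obtain ⟨ht1, ht2⟩ := ht
      have htpos : (0:ℝ) < t := lt_of_lt_of_le (by linarith) ht1
      have hratio : (t + 1) / t ≤ (((n : ℝ) + 1) / (n : ℝ)) := by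
        rw [div_le_div_iff₀ htpos (by positivity)]
        nlinarith
      have h2 : (((n : ℝ) + 1) / (n : ℝ)) ^ (-α) ≤ ((t + 1) / t) ^ (-α) :=
        rpow_neg_anti hα0 (by positivity) hratio
      have h3 : (t + 1) ^ (-α) = ((t + 1) / t) ^ (-α) * t ^ (-α) := by
        rw [← Real.mul_rpow (by positivity) htpos.le, div_mul_cancel₀]
        exact htpos.ne'
      have h5 : (0:ℝ) ≤ t ^ (-α) := Real.rpow_nonneg htpos.le _
      calc (((n : ℝ) + 1) / (n : ℝ)) ^ (-α) * ((1 - α) * (t + 0) ^ (-α))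
          = (1 - α) * ((((n : ℝ) + 1) / (n : ℝ)) ^ (-α) * t ^ (-α)) := by
            rw [add_zero]; ring
        _ ≤ (1 - α) * (((t + 1) / t) ^ (-α) * t ^ (-α)) := by
            apply mul_le_mul_of_nonneg_left _ (by linarith)
            exact mul_le_mul_of_nonneg_right h2 h5
        _ = (1 - α) * (t + 1) ^ (-α) := by rw [h3]
  calc (((n : ℝ) + 1) / (n : ℝ)) ^ (-α) * L1a α n
      = ∫ t in (n : ℝ)..((n : ℝ) + 1),
          (((n : ℝ) + 1) / (n : ℝ)) ^ (-α) * ((1 - α) * (t + 0) ^ (-α)) := by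
        rw [intervalIntegral.integral_const_mul, L1a_int hα1 n]
        simp only [add_zero]
    _ ≤ _ := cmp

/-- log-convexity chain -/
lemma L1a_key (hα0 : 0 < α) (hα1 : α < 1) {i n : ℕ} (h : i + 1 ≤ n) :
    L1a α (i + 1) * L1a α n ≤ L1a α i * L1a α (n + 1) := by
  have hn : 1 ≤ n := le_trans (Nat.le_add_left 1 i) h
  have hnr : (1:ℝ) ≤ (n:ℝ) := by exact_mod_cast hn
  have hir : ((i:ℝ) + 1) ≤ (n:ℝ) := by exact_mod_cast h
  have h1 := L1a_ratio_upper hα0 hα1 i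
  have h2 := L1a_ratio_lower hα0 hα1 hn
  have hr : (((i : ℝ) + 2) / ((i : ℝ) + 1)) ^ (-α) ≤ (((n : ℝ) + 1) / (n : ℝ)) ^ (-α) := by
    apply rpow_neg_anti hα0 (by positivity)
    rw [div_le_div_iff₀ (by positivity) (by positivity)]
    nlinarith
  have hai : 0 ≤ L1a α i := (L1a_pos hα1 i).le
  have han : 0 ≤ L1a α n := (L1a_pos hα1 n).le
  calc L1a α (i + 1) * L1a α n
      ≤ ((((i : ℝ) + 2) / ((i : ℝ) + 1)) ^ (-α) * L1a α i) * L1a α n :=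
        mul_le_mul_of_nonneg_right h1 han
    _ = L1a α i * ((((i : ℝ) + 2) / ((i : ℝ) + 1)) ^ (-α) * L1a α n) := by ring
    _ ≤ L1a α i * ((((n : ℝ) + 1) / (n : ℝ)) ^ (-α) * L1a α n) :=
        mul_le_mul_of_nonneg_left (mul_le_mul_of_nonneg_right hr han) hai
    _ ≤ L1a α i * L1a α (n + 1) := mul_le_mul_of_nonneg_left h2 hai

lemma L1a_anti (hα0 : 0 < α) (hα1 : α < 1) (i : ℕ) : L1a α (i + 1) ≤ L1a α i := by
  have h1 := L1a_ratio_upper hα0 hα1 i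
  have hr : (((i : ℝ) + 2) / ((i : ℝ) + 1)) ^ (-α) ≤ 1 := by
    apply Real.rpow_le_one_of_one_le_of_nonpos _ (by linarith)
    rw [le_div_iff₀ (by positivity)]
    linarith
  nlinarith [L1a_pos hα1 i]

lemma L1p_zero (α : ℝ) : L1p α 0 = 1 := by rw [L1p]

lemma L1p_succ (α : ℝ) (n : ℕ) :
    L1p α (n + 1) = ∑ j ∈ Finset.range (n + 1),
      (L1a α j - L1a α (j + 1)) * L1p α (n - j) := by
  rw [L1p]
  exact Fin.sum_univ_eq_sum_range (fun j => (L1a α j - L1a α (j + 1)) * L1p α (n - j)) (n + 1)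

lemma L1p_nonneg (hα0 : 0 < α) (hα1 : α < 1) : ∀ n, 0 ≤ L1p α n := by
  intro n
  induction n using Nat.strong_induction_on with
  | _ n ih =>
    match n with
    | 0 => rw [L1p_zero]; norm_num
    | Nat.succ m =>
      rw [L1p_succ]
      apply Finset.sum_nonneg
      intro j hj
      exact mul_nonneg (sub_nonneg.mpr (L1a_anti hα0 hα1 j)) (ih (m - j) (by omega))

lemma A_eq_one (hα0 : 0 < α) (hα1 : α < 1) :
    ∀ n, ∑ j ∈ Finset.range (n + 1), L1a α j * L1p α (n - j) = 1 := by
  intro n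
  induction n with
  | zero => simp [L1a_zero hα1, L1p_zero]
  | succ n ih =>
    rw [Finset.sum_range_succ']
    simp only [Nat.succ_sub_succ, Nat.sub_zero, L1a_zero hα1, one_mul]
    rw [L1p_succ]
    have e : ∀ j ∈ Finset.range (n + 1),
        L1a α (j + 1) * L1p α (n - j) + (L1a α j - L1a α (j + 1)) * L1p α (n - j)
          = L1a α j * L1p α (n - j) := by
      intro j _; ring
    rw [← Finset.sum_add_distrib, Finset.sum_congr rfl e]
    exact ih

lemma gap_identity (hα0 : 0 < α) (hα1 : α < 1) (m : ℕ) :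
    ∑ j ∈ Finset.range (m + 1), L1a α j * (L1p α (m - j) - L1p α ((m - j) + 1))
      = L1a α (m + 1) := by
  have h1 := A_eq_one hα0 hα1 m
  have h2 := A_eq_one hα0 hα1 (m + 1)
  rw [Finset.sum_range_succ] at h2
  have e : ∀ j ∈ Finset.range (m + 1),
      L1a α j * L1p α (m + 1 - j) = L1a α j * L1p α ((m - j) + 1) := by
    intro j hj
    have hj' : j ≤ m := by simpa [Nat.lt_succ_iff] using Finset.mem_range.mp hj
    congr 2
    omega
  rw [Finset.sum_congr rfl e, Nat.sub_self, L1p_zero, mul_one] at h2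
  have expand : ∀ j ∈ Finset.range (m + 1),
      L1a α j * (L1p α (m - j) - L1p α ((m - j) + 1))
        = L1a α j * L1p α (m - j) - L1a α j * L1p α ((m - j) + 1) := by
    intro j _; ring
  rw [Finset.sum_congr rfl expand, Finset.sum_sub_distrib, h1]
  linarith

lemma L1p_succ_le (hα0 : 0 < α) (hα1 : α < 1) : ∀ n, L1p α (n + 1) ≤ L1p α n := by
  intro n
  induction n using Nat.strong_induction_on with
  | _ n ih =>
    match n with
    | 0 =>
      have e1 : L1p α 1 = 1 - L1a α 1 := by
        rw [L1p_succ]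
        simp [L1a_zero hα1, L1p_zero]
      rw [e1, L1p_zero]
      have := L1a_pos hα1 1
      linarith
    | Nat.succ m =>
      have hg := gap_identity hα0 hα1 (m + 1)
      rw [Finset.sum_range_succ'] at hg
      simp only [Nat.succ_sub_succ, Nat.sub_zero, L1a_zero hα1, one_mul] at hg
      -- hg : Σ_{j<m+1} a(j+1) * (p(m-j) - p(m-j+1)) + (p(m+1) - p(m+2)) = a(m+2)
      have hpos1 := L1a_pos hα1 (m + 1)
      have hbound : ∑ j ∈ Finset.range (m + 1),
          L1a α (j + 1) * (L1p α (m - j) - L1p α ((m - j) + 1)) ≤ L1a α (m + 2) := by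
        calc ∑ j ∈ Finset.range (m + 1),
              L1a α (j + 1) * (L1p α (m - j) - L1p α ((m - j) + 1))
            ≤ ∑ j ∈ Finset.range (m + 1),
              (L1a α (m + 2) / L1a α (m + 1)) *
                (L1a α j * (L1p α (m - j) - L1p α ((m - j) + 1))) := by
              apply Finset.sum_le_sum
              intro j hj
              have hj' : j + 1 ≤ m + 1 := Finset.mem_range.mp hj
              have hkey := L1a_key hα0 hα1 (i := j) (n := m + 1) hj'
              have hgap : 0 ≤ L1p α (m - j) - L1p α ((m - j) + 1) :=
                sub_nonneg.mpr (ih (m - j) (by omega))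
              have h4 : L1a α (j + 1) ≤ L1a α (m + 2) / L1a α (m + 1) * L1a α j := by
                rw [div_mul_eq_mul_div, le_div_iff₀ hpos1]
                nlinarith [hkey]
              calc L1a α (j + 1) * (L1p α (m - j) - L1p α ((m - j) + 1))
                  ≤ (L1a α (m + 2) / L1a α (m + 1) * L1a α j) *
                      (L1p α (m - j) - L1p α ((m - j) + 1)) :=
                    mul_le_mul_of_nonneg_right h4 hgap
                _ = (L1a α (m + 2) / L1a α (m + 1)) *
                      (L1a α j * (L1p α (m - j) - L1p α ((m - j) + 1))) := by ring
          _ = (L1a α (m + 2) / L1a α (m + 1)) *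
                ∑ j ∈ Finset.range (m + 1),
                  L1a α j * (L1p α (m - j) - L1p α ((m - j) + 1)) := by
              rw [Finset.mul_sum]
          _ = (L1a α (m + 2) / L1a α (m + 1)) * L1a α (m + 1) := by
              rw [gap_identity hα0 hα1 m]
          _ = L1a α (m + 2) := div_mul_cancel₀ _ hpos1.ne'
      linarith

lemma L1p_mono (hα0 : 0 < α) (hα1 : α < 1) {m n : ℕ} (h : m ≤ n) :
    L1p α n ≤ L1p α m := by
  induction n, h using Nat.le_induction with
  | base => exact le_refl _
  | succ n hmn ih => exact le_trans (L1p_succ_le hα0 hα1 n) ih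

lemma L1p_one (hα1 : α < 1) : L1p α 1 = 1 - L1a α 1 := by
  rw [L1p_succ]
  simp [L1a_zero hα1, L1p_zero]

lemma L1p_lt_one (hα0 : 0 < α) (hα1 : α < 1) {n : ℕ} (hn : 1 ≤ n) : L1p α n < 1 := by
  have h1 : L1p α n ≤ L1p α 1 := L1p_mono hα0 hα1 hn
  rw [L1p_one hα1] at h1
  have := L1a_pos hα1 1
  linarith

lemma sum_L1a (hα1 : α < 1) (n : ℕ) :
    ∑ j ∈ Finset.range (n + 1), L1a α j = ((n : ℝ) + 1) ^ (1 - α) := by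
  have e : ∀ j ∈ Finset.range (n + 1),
      L1a α j = (fun k : ℕ => ((k : ℝ)) ^ (1 - α)) (j + 1)
        - (fun k : ℕ => ((k : ℝ)) ^ (1 - α)) j := by
    intro j _
    simp only [L1a]
    push_cast
    ring_nf
  rw [Finset.sum_congr rfl e, Finset.sum_range_sub (fun k : ℕ => ((k : ℝ)) ^ (1 - α))]
  simp only [Nat.cast_zero, Nat.cast_add, Nat.cast_one]
  rw [Real.zero_rpow (by linarith : (1:ℝ) - α ≠ 0)]
  ring

end L1aux

theorem L1p_upper_bound (α : ℝ) (hα0 : 0 < α) (hα1 : α < 1) (n : ℕ) :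
    L1p α n ≤ ((n : ℝ) + 1) ^ (α - 1) ∧
    (1 ≤ n → L1p α n < ((n : ℝ) + 1) ^ (α - 1)) := by
  have hX : (0:ℝ) < ((n : ℝ) + 1) ^ (1 - α) := Real.rpow_pos_of_pos (by positivity) _
  have hexp : ((n : ℝ) + 1) ^ (α - 1) = 1 / (((n : ℝ) + 1) ^ (1 - α)) := by
    rw [show α - 1 = -(1 - α) by ring, Real.rpow_neg (by positivity), one_div]
  constructor
  · have H : L1p α n * (((n : ℝ) + 1) ^ (1 - α)) ≤ 1 := by
      rw [← L1aux.sum_L1a hα1 n, Finset.mul_sum]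
      calc ∑ j ∈ Finset.range (n + 1), L1p α n * L1a α j
          ≤ ∑ j ∈ Finset.range (n + 1), L1a α j * L1p α (n - j) := by
            apply Finset.sum_le_sum
            intro j _
            rw [mul_comm]
            exact mul_le_mul_of_nonneg_left
              (L1aux.L1p_mono hα0 hα1 (Nat.sub_le n j)) (L1aux.L1a_pos hα1 j).le
        _ = 1 := L1aux.A_eq_one hα0 hα1 n
    rw [hexp]
    exact (le_div_iff₀ hX).mpr H
  · intro hn
    have H : L1p α n * (((n : ℝ) + 1) ^ (1 - α)) < 1 := by
      rw [← L1aux.sum_L1a hα1 n, Finset.mul_sum]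
      calc ∑ j ∈ Finset.range (n + 1), L1p α n * L1a α j
          < ∑ j ∈ Finset.range (n + 1), L1a α j * L1p α (n - j) := by
            apply Finset.sum_lt_sum
            · intro j _
              rw [mul_comm]
              exact mul_le_mul_of_nonneg_left
                (L1aux.L1p_mono hα0 hα1 (Nat.sub_le n j)) (L1aux.L1a_pos hα1 j).le
            · refine ⟨n, Finset.self_mem_range_succ n, ?_⟩
              rw [Nat.sub_self, L1aux.L1p_zero, mul_one, mul_comm]
              exact mul_lt_of_lt_one_right (L1aux.L1a_pos hα1 n)
                (L1aux.L1p_lt_one hα0 hα1 hn)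
        _ = 1 := L1aux.A_eq_one hα0 hα1 n
    rw [hexp]
    exact (lt_div_iff₀ hX).mpr H
end

section
/- Let 0 < α < 1 and σ ∈ (0,1). If u : [0,T] → ℝ is continuously differentiable on (0, t_1] with |u'(s)| ≤ C s^{σ-1}, then the first-step L1 truncation error satisfies |(1/Γ(1-α)) ∫_0^{t_1} (t_1-s)^{-α} [ (u(t_1)-u(0))/τ - u'(s) ] ds | ≤ C' τ^{σ-α}, where t_1 = τ. In particular, ∫_0^{t_1} (t_1-s)^{-α} s^{σ-1} ds = t_1^{σ-α} B(1-α, σ). -/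
/-!
Split `(u(τ) - u(0))/τ - u'(s)` into its two terms. By the fundamental theorem of calculus the
difference quotient is at most `C τ^(σ-1)/σ`, and the weight `(τ - s)^(-α)` has mass
`τ^(1-α)/(1-α)`; the derivative term is controlled by the Beta integral
`∫₀^τ (τ - s)^(-α) s^(σ-1) ds = τ^(σ-α) B(1-α, σ)`, obtained by scaling the complex
Beta integral. Both contributions are `O(τ^(σ-α))`.
-/

open MeasureTheory intervalIntegral Set

section BetaIntegral

variable {a b τ : ℝ}

lemma intervalIntegrable_rpow_mul_sub_rpow_half (hτ : 0 < τ) (ha : -1 < a) (b : ℝ) :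
    IntervalIntegrable (fun s => s ^ a * (τ - s) ^ b) volume 0 (τ / 2) := by
  refine (intervalIntegrable_rpow' ha).mul_continuousOn
    (ContinuousOn.rpow_const (by fun_prop) fun s hs => Or.inl ?_)
  rw [uIcc_of_le (by linarith)] at hs
  linarith [hs.2]

lemma intervalIntegrable_rpow_mul_sub_rpow (hτ : 0 < τ) (ha : -1 < a) (hb : -1 < b) :
    IntervalIntegrable (fun s => s ^ a * (τ - s) ^ b) volume 0 τ := by
  refine (intervalIntegrable_rpow_mul_sub_rpow_half hτ ha b).trans ?_
  -- on `[τ/2, τ]` it is the left-half integrand with `a`, `b` swapped, reflected by `s ↦ τ - s`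
  have hleft := ((intervalIntegrable_rpow_mul_sub_rpow_half hτ hb a).comp_sub_left τ).symm
  simp only [sub_zero, sub_sub_cancel, show τ - τ / 2 = τ / 2 by ring] at hleft
  simpa only [mul_comm] using hleft

lemma intervalIntegrable_sub_rpow (hτ : 0 < τ) (hb : -1 < b) :
    IntervalIntegrable (fun s => (τ - s) ^ b) volume 0 τ := by
  simpa using intervalIntegrable_rpow_mul_sub_rpow hτ (a := 0) (by norm_num) hb

lemma integral_sub_rpow (hb : -1 < b) :
    ∫ s in (0 : ℝ)..τ, (τ - s) ^ b = τ ^ (b + 1) / (b + 1) := by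
  rw [integral_comp_sub_left (fun x : ℝ => x ^ b) τ, sub_self, sub_zero,
    integral_rpow (Or.inl hb), Real.zero_rpow (by linarith), sub_zero]

lemma integral_rpow_mul_sub_rpow (hτ : 0 < τ) (ha : 0 < a) (hb : 0 < b) :
    ∫ s in (0 : ℝ)..τ, s ^ (a - 1) * (τ - s) ^ (b - 1)
      = τ ^ (a + b - 1) * (Real.Gamma a * Real.Gamma b / Real.Gamma (a + b)) := by
  have hΓ : Complex.Gamma ((a + b : ℝ) : ℂ) ≠ 0 := by
    rw [Complex.Gamma_ofReal]
    exact_mod_cast (Real.Gamma_pos_of_pos (add_pos ha hb)).ne'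
  have hbeta : Complex.betaIntegral a b
      = Complex.Gamma a * Complex.Gamma b / Complex.Gamma ((a + b : ℝ) : ℂ) := by
    rw [eq_div_iff hΓ, mul_comm, Complex.ofReal_add,
      ← Complex.Gamma_mul_Gamma_eq_betaIntegral (by simpa) (by simpa)]
  have hcast : ((∫ s in (0 : ℝ)..τ, s ^ (a - 1) * (τ - s) ^ (b - 1) : ℝ) : ℂ)
      = ∫ s in (0 : ℝ)..τ, (s : ℂ) ^ ((a : ℂ) - 1) * (τ - s : ℂ) ^ ((b : ℂ) - 1) := by
    rw [← integral_ofReal]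
    refine integral_congr fun s hs => ?_
    rw [uIcc_of_le hτ.le] at hs
    push_cast
    rw [Complex.ofReal_cpow hs.1, Complex.ofReal_cpow (by linarith [hs.2] : (0 : ℝ) ≤ τ - s)]
    push_cast
    ring
  have hexp : (a : ℂ) + b - 1 = ((a + b - 1 : ℝ) : ℂ) := by push_cast; ring
  apply Complex.ofReal_injective
  rw [hcast, Complex.betaIntegral_scaled _ _ hτ, hbeta, hexp, ← Complex.ofReal_cpow hτ.le]
  simp only [Complex.ofReal_mul, Complex.ofReal_div, Complex.Gamma_ofReal]

end BetaIntegral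

lemma abs_sub_le_integral_of_abs_deriv_le {f f' g : ℝ → ℝ} {a b : ℝ} (hab : a ≤ b)
    (hf : ContinuousOn f (Icc a b)) (hderiv : ∀ x ∈ Ioo a b, HasDerivAt f (f' x) x)
    (hbound : ∀ x ∈ Ioo a b, |f' x| ≤ g x) (hg : IntervalIntegrable g volume a b) :
    |f b - f a| ≤ ∫ x in a..b, g x := by
  have hderiv_eq : EqOn (deriv f) f' (Ioo a b) := fun x hx => (hderiv x hx).deriv
  have hf' : IntervalIntegrable f' volume a b := by
    rw [intervalIntegrable_iff_integrableOn_Ioo_of_le hab] at hg ⊢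
    refine IntegrableOn.congr_fun (hg.mono' (measurable_deriv f).aestronglyMeasurable ?_)
      hderiv_eq measurableSet_Ioo
    filter_upwards [ae_restrict_mem measurableSet_Ioo] with x hx
    rw [Real.norm_eq_abs, hderiv_eq hx]
    exact hbound x hx
  rw [← integral_eq_sub_of_hasDerivAt_of_le hab hf hderiv hf', ← Real.norm_eq_abs]
  refine norm_integral_le_of_norm_le hab ?_ hg
  filter_upwards [Measure.ae_ne volume b] with x hxb hx
  exact hbound x ⟨hx.1, lt_of_le_of_ne hx.2 hxb⟩

section FirstStep

variable {α σ τ C : ℝ}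

lemma integral_sub_rpow_neg_mul_rpow (hα1 : α < 1) (hσ0 : 0 < σ) (hτ : 0 < τ) :
    ∫ s in (0 : ℝ)..τ, (τ - s) ^ (-α) * s ^ (σ - 1)
      = τ ^ (σ - α) * (Real.Gamma (1 - α) * Real.Gamma σ / Real.Gamma (1 - α + σ)) := by
  have h := integral_rpow_mul_sub_rpow hτ hσ0 (sub_pos.2 hα1)
  rw [show σ + (1 - α) - 1 = σ - α by ring, add_comm σ, mul_comm (Real.Gamma σ),
    show 1 - α - 1 = -α by ring] at h
  simpa only [mul_comm] using h

lemma abs_sub_div_le_of_abs_deriv_le_rpow {u u' : ℝ → ℝ} (hσ0 : 0 < σ) (hτ : 0 < τ)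
    (hu : ContinuousOn u (Icc 0 τ)) (hderiv : ∀ s ∈ Ioo 0 τ, HasDerivAt u (u' s) s)
    (hbound : ∀ s ∈ Ioo 0 τ, |u' s| ≤ C * s ^ (σ - 1)) :
    |(u τ - u 0) / τ| ≤ C * τ ^ (σ - 1) / σ := by
  have hσ1 : -1 < σ - 1 := by linarith
  have hdiff : |u τ - u 0| ≤ ∫ s in (0 : ℝ)..τ, C * s ^ (σ - 1) :=
    abs_sub_le_integral_of_abs_deriv_le hτ.le hu hderiv hbound
      ((intervalIntegrable_rpow' hσ1).const_mul C)
  rw [intervalIntegral.integral_const_mul, integral_rpow (Or.inl hσ1), sub_add_cancel,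
    Real.zero_rpow hσ0.ne', sub_zero] at hdiff
  rw [abs_div, abs_of_pos hτ, Real.rpow_sub_one hτ.ne', div_le_iff₀ hτ]
  exact hdiff.trans_eq (by field_simp)

lemma abs_integral_sub_rpow_neg_mul_sub_le (hα1 : α < 1) (hσ0 : 0 < σ) (hτ : 0 < τ) {K : ℝ}
    {v : ℝ → ℝ} (hK : |K| ≤ C * τ ^ (σ - 1) / σ)
    (hv : ∀ s ∈ Ioc 0 τ, |v s| ≤ C * s ^ (σ - 1)) :
    |∫ s in (0 : ℝ)..τ, (τ - s) ^ (-α) * (K - v s)|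
      ≤ C * (1 / (σ * (1 - α))
          + Real.Gamma (1 - α) * Real.Gamma σ / Real.Gamma (1 - α + σ)) * τ ^ (σ - α) := by
  set B := Real.Gamma (1 - α) * Real.Gamma σ / Real.Gamma (1 - α + σ)
  have hα : -1 < -α := by linarith
  have h1α : 0 < 1 - α := by linarith
  have hweight := (intervalIntegrable_sub_rpow hτ hα).mul_const |K|
  have hkernel := ((intervalIntegrable_rpow_mul_sub_rpow hτ (by linarith : -1 < σ - 1) hα).congr
    fun s _ => mul_comm _ _).const_mul C
  have hpow : τ ^ (σ - 1) * τ ^ (1 - α) = τ ^ (σ - α) := by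
    rw [← Real.rpow_add hτ]; ring_nf
  calc |∫ s in (0 : ℝ)..τ, (τ - s) ^ (-α) * (K - v s)|
      ≤ ∫ s in 0..τ, (τ - s) ^ (-α) * |K| + C * ((τ - s) ^ (-α) * s ^ (σ - 1)) := by
        rw [← Real.norm_eq_abs]
        refine intervalIntegral.norm_integral_le_of_norm_le hτ.le (.of_forall fun s hs => ?_)
          (hweight.add hkernel)
        have hw : 0 ≤ (τ - s) ^ (-α) := Real.rpow_nonneg (by linarith [hs.2]) _
        rw [Real.norm_eq_abs, abs_mul, abs_of_nonneg hw]
        nlinarith [abs_sub K (v s), hv s hs]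
    _ = |K| * (τ ^ (1 - α) / (1 - α)) + C * (τ ^ (σ - α) * B) := by
        rw [integral_add hweight hkernel, intervalIntegral.integral_mul_const,
          intervalIntegral.integral_const_mul, integral_sub_rpow hα,
          integral_sub_rpow_neg_mul_rpow hα1 hσ0 hτ, neg_add_eq_sub, mul_comm]
    _ ≤ C * τ ^ (σ - 1) / σ * (τ ^ (1 - α) / (1 - α)) + C * (τ ^ (σ - α) * B) := by
        gcongr
    _ = _ := by rw [← hpow]; field_simp

end FirstStep

theorem L1_first_step_truncation_general (α σ : ℝ) (hα1 : α < 1)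
    (hσ0 : 0 < σ) (C : ℝ) (hC : 0 ≤ C) :
    ∃ C' : ℝ, 0 < C' ∧ ∀ τ : ℝ, 0 < τ → ∀ u u' : ℝ → ℝ,
      ContinuousOn u (Set.Icc 0 τ) →
      (∀ s ∈ Set.Ioc (0 : ℝ) τ, HasDerivAt u (u' s) s) →
      (∀ s ∈ Set.Ioc (0 : ℝ) τ, |u' s| ≤ C * s ^ (σ - 1)) →
      (|(1 / Real.Gamma (1 - α)) *
          ∫ s in (0 : ℝ)..τ, (τ - s) ^ (-α) * ((u τ - u 0) / τ - u' s)|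
        ≤ C' * τ ^ (σ - α)) ∧
      (∫ s in (0 : ℝ)..τ, (τ - s) ^ (-α) * s ^ (σ - 1)
        = τ ^ (σ - α) *
            (Real.Gamma (1 - α) * Real.Gamma σ / Real.Gamma (1 - α + σ))) := by
  set M :=
    C * (1 / (σ * (1 - α)) + Real.Gamma (1 - α) * Real.Gamma σ / Real.Gamma (1 - α + σ))
  have hΓ : 0 < Real.Gamma (1 - α) := Real.Gamma_pos_of_pos (by linarith)
  have hM : 0 ≤ M := by
    have hΓσ := Real.Gamma_pos_of_pos hσ0
    have hΓsum := Real.Gamma_pos_of_pos (by linarith : 0 < 1 - α + σ)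
    have h1α : 0 < 1 - α := by linarith
    positivity
  refine ⟨M / Real.Gamma (1 - α) + 1, by positivity,
    fun τ hτ u u' hu hderiv hbound => ⟨?_, integral_sub_rpow_neg_mul_rpow hα1 hσ0 hτ⟩⟩
  have hK := abs_sub_div_le_of_abs_deriv_le_rpow hσ0 hτ hu
    (fun s hs => hderiv s (Ioo_subset_Ioc_self hs)) (fun s hs => hbound s (Ioo_subset_Ioc_self hs))
  have hint := abs_integral_sub_rpow_neg_mul_sub_le hα1 hσ0 hτ hK hbound
  rw [abs_mul, abs_of_pos (one_div_pos.2 hΓ), add_mul]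
  calc 1 / Real.Gamma (1 - α)
        * |∫ s in (0 : ℝ)..τ, (τ - s) ^ (-α) * ((u τ - u 0) / τ - u' s)|
      ≤ M / Real.Gamma (1 - α) * τ ^ (σ - α) := by
        rw [one_div_mul_eq_div, div_mul_eq_mul_div]
        gcongr
    _ ≤ M / Real.Gamma (1 - α) * τ ^ (σ - α) + 1 * τ ^ (σ - α) :=
        le_add_of_nonneg_right (by positivity)

theorem L1_first_step_truncation (α σ : ℝ) (hα0 : 0 < α) (hα1 : α < 1)
    (hσ0 : 0 < σ) (hσ1 : σ < 1) (C : ℝ) (hC : 0 ≤ C) :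
    ∃ C' : ℝ, 0 < C' ∧ ∀ τ : ℝ, 0 < τ → ∀ u u' : ℝ → ℝ,
      ContinuousOn u (Set.Icc 0 τ) →
      (∀ s ∈ Set.Ioc (0 : ℝ) τ, HasDerivAt u (u' s) s) →
      (∀ s ∈ Set.Ioc (0 : ℝ) τ, |u' s| ≤ C * s ^ (σ - 1)) →
      (|(1 / Real.Gamma (1 - α)) *
          ∫ s in (0 : ℝ)..τ, (τ - s) ^ (-α) * ((u τ - u 0) / τ - u' s)|
        ≤ C' * τ ^ (σ - α)) ∧
      (∫ s in (0 : ℝ)..τ, (τ - s) ^ (-α) * s ^ (σ - 1)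
        = τ ^ (σ - α) *
            (Real.Gamma (1 - α) * Real.Gamma σ / Real.Gamma (1 - α + σ))) :=
  L1_first_step_truncation_general α σ hα1 hσ0 C hC
end

section
/- For 0 < α < 1 and σ with 1 < σ ≤ 2, let u : [0,T] → ℝ be twice continuously differentiable on (0,T] with |u''(s)| ≤ C s^{σ-2}. For the uniform mesh t_k = kτ and 1 ≤ k ≤ n-1, the single-interval L1 remainder R_{nk} = (−α/Γ(1−α)) ∫_{t_k}^{t_{k+1}} (t_n − s)^{−α−1} [ ((u(t_{k+1})−u(t_k))/τ)(s − t_k) − (u(s)−u(t_k)) ] ds satisfies |R_{nk}| ≤ C' τ^{σ−α} k^{σ−2} (n−k+1)^{−α−1} for k ≤ n−2, with C' independent of n, k, τ. -/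
set_option maxHeartbeats 1000000 in
theorem L1_interior_remainder (α σ : ℝ) (hα0 : 0 < α) (hα1 : α < 1)
    (hσ1 : 1 < σ) (hσ2 : σ ≤ 2) (C : ℝ) (hC : 0 ≤ C) :
    ∃ C' : ℝ, 0 < C' ∧ ∀ τ T : ℝ, 0 < τ → ∀ u u' u'' : ℝ → ℝ,
      (∀ s ∈ Set.Ioc (0 : ℝ) T, HasDerivAt u (u' s) s) →
      (∀ s ∈ Set.Ioc (0 : ℝ) T, HasDerivAt u' (u'' s) s) →
      (∀ s ∈ Set.Ioc (0 : ℝ) T, |u'' s| ≤ C * s ^ (σ - 2)) →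
      ∀ n k : ℕ, 1 ≤ k → k + 2 ≤ n → (n : ℝ) * τ ≤ T →
      |(-α / Real.Gamma (1 - α)) *
          ∫ s in ((k : ℝ) * τ)..(((k : ℝ) + 1) * τ),
            ((n : ℝ) * τ - s) ^ (-α - 1) *
              ((u (((k : ℝ) + 1) * τ) - u ((k : ℝ) * τ)) / τ * (s - (k : ℝ) * τ)
                - (u s - u ((k : ℝ) * τ)))|
        ≤ C' * τ ^ (σ - α) * (k : ℝ) ^ (σ - 2) * ((n : ℝ) - (k : ℝ) + 1) ^ (-α - 1) := by
  have hΓ : 0 < Real.Gamma (1 - α) := Real.Gamma_pos_of_pos (by linarith)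
  refine ⟨9 * α * C / Real.Gamma (1 - α) + 1, by positivity, ?_⟩
  intro τ T hτ u u' u'' hu hu' hbnd n k hk hkn hnT
  set a : ℝ := (k : ℝ) * τ with ha
  set b : ℝ := ((k : ℝ) + 1) * τ with hb
  set tn : ℝ := (n : ℝ) * τ with htn
  have hk1 : (1 : ℝ) ≤ (k : ℝ) := by exact_mod_cast hk
  have hkn' : (k : ℝ) + 2 ≤ (n : ℝ) := by exact_mod_cast hkn
  have ha0 : 0 < a := mul_pos (lt_of_lt_of_le one_pos hk1) hτ
  have hab : a < b := by rw [ha, hb]; nlinarith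
  have hba : b - a = τ := by rw [ha, hb]; ring
  have hbT : b ≤ T := le_trans (by rw [hb, htn] at *; nlinarith) hnT
  have hsub : Set.Icc a b ⊆ Set.Ioc 0 T := fun x hx =>
    ⟨lt_of_lt_of_le ha0 hx.1, le_trans hx.2 hbT⟩
  set M : ℝ := C * a ^ (σ - 2) with hM
  have hM0 : 0 ≤ M := mul_nonneg hC (Real.rpow_nonneg ha0.le _)
  have hbnd' : ∀ x ∈ Set.Icc a b, |u'' x| ≤ M := by
    intro x hx
    refine (hbnd x (hsub hx)).trans ?_
    exact mul_le_mul_of_nonneg_left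
      (Real.rpow_le_rpow_of_nonpos ha0 hx.1 (by linarith)) hC
  have hcont' : ContinuousOn u' (Set.Icc a b) := fun x hx =>
    ((hu' x (hsub hx)).continuousAt).continuousWithinAt
  have hcontu : ContinuousOn u (Set.Icc a b) := fun x hx =>
    ((hu x (hsub hx)).continuousAt).continuousWithinAt
  -- Lipschitz-type bound for u'
  have key : ∀ x ∈ Set.Icc a b, ∀ y ∈ Set.Icc a b, x < y → |u' y - u' x| ≤ M * τ := by
    intro x hx y hy hxy
    obtain ⟨c, hc, hceq⟩ := exists_hasDerivAt_eq_slope u' u'' hxy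
      (hcont'.mono (Set.Icc_subset_Icc hx.1 hy.2))
      (fun z hz => hu' z (hsub ⟨le_trans hx.1 hz.1.le, le_trans hz.2.le hy.2⟩))
    have hne : y - x ≠ 0 := sub_ne_zero.mpr hxy.ne'
    have heq : u' y - u' x = (y - x) * u'' c := by
      rw [hceq]; field_simp
    rw [heq, abs_mul, abs_of_pos (sub_pos.mpr hxy)]
    have hcmem : c ∈ Set.Icc a b := ⟨le_trans hx.1 hc.1.le, le_trans hc.2.le hy.2⟩
    have h1 : |u'' c| ≤ M := hbnd' c hcmem
    have h2 : y - x ≤ τ := by have := hx.1; have := hy.2; linarith [hba]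
    calc (y - x) * |u'' c| ≤ τ * M :=
          mul_le_mul h2 h1 (abs_nonneg _) hτ.le
      _ = M * τ := mul_comm _ _
  have hLip : ∀ x ∈ Set.Icc a b, ∀ y ∈ Set.Icc a b, |u' y - u' x| ≤ M * τ := by
    intro x hx y hy
    rcases lt_trichotomy x y with h | h | h
    · exact key x hx y hy h
    · simp [h, mul_nonneg hM0 hτ.le]
    · rw [abs_sub_comm]; exact key y hy x hx h
  -- mean value for u on [a,b]
  obtain ⟨ξ, hξ, hξeq⟩ := exists_hasDerivAt_eq_slope u u' hab hcontu
    (fun z hz => hu z (hsub ⟨hz.1.le, hz.2.le⟩))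
  rw [hba] at hξeq
  set d : ℝ := (n : ℝ) - (k : ℝ) - 1 with hd
  have hd1 : 1 ≤ d := by rw [hd]; linarith
  have hd0 : 0 < d := lt_of_lt_of_le one_pos hd1
  have hdτ : tn - b = d * τ := by rw [htn, hb, hd]; ring
  set K : ℝ := (d * τ) ^ (-α - 1) * (M * τ * τ) with hK
  -- pointwise bound on the integrand
  have hpt : ∀ s ∈ Set.uIoc a b,
      ‖(tn - s) ^ (-α - 1) * ((u b - u a) / τ * (s - a) - (u s - u a))‖ ≤ K := by
    rw [Set.uIoc_of_le hab.le]
    intro s hs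
    have hsa : a < s := hs.1
    have hsb : s ≤ b := hs.2
    obtain ⟨η, hη, hηeq⟩ := exists_hasDerivAt_eq_slope u u' hsa
      (hcontu.mono (Set.Icc_subset_Icc le_rfl hsb))
      (fun z hz => hu z (hsub ⟨hz.1.le, le_trans hz.2.le hsb⟩))
    have hsane : s - a ≠ 0 := sub_ne_zero.mpr hsa.ne'
    have h1 : u b - u a = u' ξ * τ := by
      rw [hξeq]; field_simp
    have h2 : u s - u a = u' η * (s - a) := by
      rw [hηeq]; field_simp
    have hE : (u b - u a) / τ * (s - a) - (u s - u a) = (u' ξ - u' η) * (s - a) := by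
      rw [h1, h2]; field_simp
    have hξm : ξ ∈ Set.Icc a b := ⟨hξ.1.le, hξ.2.le⟩
    have hηm : η ∈ Set.Icc a b := ⟨hη.1.le, le_trans hη.2.le hsb⟩
    have hEb : |(u b - u a) / τ * (s - a) - (u s - u a)| ≤ M * τ * τ := by
      rw [hE, abs_mul, abs_of_pos (sub_pos.mpr hsa)]
      have h3 : |u' ξ - u' η| ≤ M * τ := by
        have := hLip η hηm ξ hξm; exact this
      have h4 : s - a ≤ τ := by linarith [hba]
      exact mul_le_mul h3 h4 (by linarith) (mul_nonneg hM0 hτ.le)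
    have htns : d * τ ≤ tn - s := by rw [← hdτ]; linarith
    have htns0 : 0 < tn - s := lt_of_lt_of_le (mul_pos hd0 hτ) htns
    have hpow : (tn - s) ^ (-α - 1) ≤ (d * τ) ^ (-α - 1) :=
      Real.rpow_le_rpow_of_nonpos (mul_pos hd0 hτ) htns (by linarith)
    rw [Real.norm_eq_abs, abs_mul, abs_of_nonneg (Real.rpow_nonneg htns0.le _)]
    exact mul_le_mul hpow hEb (abs_nonneg _) (Real.rpow_nonneg (by positivity) _)
  have hint : ‖∫ s in a..b, (tn - s) ^ (-α - 1) *
      ((u b - u a) / τ * (s - a) - (u s - u a))‖ ≤ K * |b - a| :=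
    intervalIntegral.norm_integral_le_of_norm_le_const hpt
  rw [Real.norm_eq_abs, hba, abs_of_pos hτ] at hint
  -- now the constant algebra
  set e : ℝ := (n : ℝ) - (k : ℝ) + 1 with he
  have hed : e = d + 2 := by rw [he, hd]; ring
  have he0 : 0 < e := by rw [hed]; linarith
  have he3d : e ≤ 3 * d := by rw [hed]; linarith
  have hd9 : d ^ (-α - 1) ≤ 9 * e ^ (-α - 1) := by
    have h1 : (3 * d) ^ (-α - 1) ≤ e ^ (-α - 1) :=
      Real.rpow_le_rpow_of_nonpos he0 he3d (by linarith)
    have hm : (3 * d) ^ (-α - 1) = (3 : ℝ) ^ (-α - 1) * d ^ (-α - 1) :=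
      Real.mul_rpow (by norm_num) hd0.le
    have hpos : (0 : ℝ) < (3 : ℝ) ^ (α + 1) := Real.rpow_pos_of_pos (by norm_num) _
    have hb9 : (3 : ℝ) ^ (α + 1) ≤ 9 := by
      have hb : (3 : ℝ) ^ (α + 1) ≤ (3 : ℝ) ^ (2 : ℝ) :=
        Real.rpow_le_rpow_of_exponent_le (by norm_num) (by linarith)
      have h32 : (3 : ℝ) ^ (2 : ℝ) = 9 := by
        rw [show (2 : ℝ) = ((2 : ℕ) : ℝ) by norm_num, Real.rpow_natCast]; norm_num
      linarith
    have h39 : (1 : ℝ) / 9 ≤ (3 : ℝ) ^ (-α - 1) := by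
      have hinv : (3 : ℝ) ^ (-α - 1) = ((3 : ℝ) ^ (α + 1))⁻¹ := by
        rw [show -α - 1 = -(α + 1) by ring, Real.rpow_neg (by norm_num)]
      rw [hinv, ← one_div]
      exact one_div_le_one_div_of_le hpos hb9
    have hdp : 0 ≤ d ^ (-α - 1) := Real.rpow_nonneg hd0.le _
    have hprod : (1 / 9) * d ^ (-α - 1) ≤ (3 : ℝ) ^ (-α - 1) * d ^ (-α - 1) :=
      mul_le_mul_of_nonneg_right h39 hdp
    rw [← hm] at hprod
    linarith
  -- power algebra
  have e1 : (d * τ) ^ (-α - 1) = d ^ (-α - 1) * τ ^ (-α - 1) :=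
    Real.mul_rpow hd0.le hτ.le
  have e2 : a ^ (σ - 2) = (k : ℝ) ^ (σ - 2) * τ ^ (σ - 2) := by
    rw [ha]; exact Real.mul_rpow (Nat.cast_nonneg k) hτ.le
  have e3 : τ ^ (-α - 1) * τ ^ (σ - 2) * (τ * τ * τ) = τ ^ (σ - α) := by
    have h3 : τ * τ * τ = τ ^ ((3 : ℕ) : ℝ) := by rw [Real.rpow_natCast]; ring
    rw [h3, ← Real.rpow_add hτ, ← Real.rpow_add hτ]
    congr 1; push_cast; ring
  have hKτ : K * τ = (C * d ^ (-α - 1) * (k : ℝ) ^ (σ - 2)) * τ ^ (σ - α) := by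
    rw [← e3, hK, hM, e1, e2]; ring
  -- assemble
  have habs : |(-α / Real.Gamma (1 - α))| = α / Real.Gamma (1 - α) := by
    rw [abs_div, abs_neg, abs_of_pos hα0, abs_of_pos hΓ]
  have hA : 0 ≤ α * C / Real.Gamma (1 - α) := by positivity
  have hP : 0 ≤ τ ^ (σ - α) := Real.rpow_nonneg hτ.le _
  have hKp : 0 ≤ (k : ℝ) ^ (σ - 2) := Real.rpow_nonneg (Nat.cast_nonneg k) _
  have hE : 0 ≤ e ^ (-α - 1) := Real.rpow_nonneg he0.le _
  have hαΓ : 0 ≤ α / Real.Gamma (1 - α) := by positivity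
  calc |(-α / Real.Gamma (1 - α)) *
        ∫ s in a..b, (tn - s) ^ (-α - 1) *
          ((u b - u a) / τ * (s - a) - (u s - u a))|
      = (α / Real.Gamma (1 - α)) *
        |∫ s in a..b, (tn - s) ^ (-α - 1) *
          ((u b - u a) / τ * (s - a) - (u s - u a))| := by rw [abs_mul, habs]
    _ ≤ (α / Real.Gamma (1 - α)) * (K * τ) := mul_le_mul_of_nonneg_left hint hαΓ
    _ = (α * C / Real.Gamma (1 - α)) * d ^ (-α - 1) *
        ((k : ℝ) ^ (σ - 2) * τ ^ (σ - α)) := by rw [hKτ]; ring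
    _ ≤ (α * C / Real.Gamma (1 - α)) * (9 * e ^ (-α - 1)) *
        ((k : ℝ) ^ (σ - 2) * τ ^ (σ - α)) :=
        mul_le_mul_of_nonneg_right (mul_le_mul_of_nonneg_left hd9 hA)
          (mul_nonneg hKp hP)
    _ ≤ (9 * α * C / Real.Gamma (1 - α) + 1) * τ ^ (σ - α) *
        (k : ℝ) ^ (σ - 2) * e ^ (-α - 1) := by
        have heq : α * C / Real.Gamma (1 - α) * (9 * e ^ (-α - 1)) *
            ((k : ℝ) ^ (σ - 2) * τ ^ (σ - α)) =
            9 * α * C / Real.Gamma (1 - α) * τ ^ (σ - α) *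
            (k : ℝ) ^ (σ - 2) * e ^ (-α - 1) := by ring
        have hnn : 0 ≤ τ ^ (σ - α) * (k : ℝ) ^ (σ - 2) * e ^ (-α - 1) :=
          mul_nonneg (mul_nonneg hP hKp) hE
        nlinarith [heq, hnn]
end

section
/- For 0 < α < 1 and 0 < σ < 1, there is a constant C = C(α,σ) such that for all integers n ≥ 2: Σ_{k=1}^{⌈n/2⌉−1} k^{σ−2} (n−k+1)^{−α−1} ≤ C n^{−(1+α)}; and for 1 < σ ≤ 2: Σ_{k=1}^{⌈n/2⌉−1} k^{σ−2} (n−k+1)^{−α−1} ≤ C n^{−2−α+σ}. -/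
/-!
On the range `2k + 1 ≤ n` of the sum the second factor is at most `(n / 2) ^ (-α - 1)`, so the sum
is at most `2 ^ (α + 1) n ^ (-α - 1) ∑_{k ≤ n/2} k ^ (σ - 2)`. For `σ < 1` the remaining sum is
bounded by the convergent series `∑ k ^ (σ - 2)`; for `1 < σ ≤ 2` it is at most
`n ^ (σ - 1) / (σ - 1)`, by telescoping the concavity bound
`q (x + 1) ^ (q - 1) ≤ (x + 1) ^ q - x ^ q` for `q = σ - 1 ∈ (0, 1]`.
-/

open Real Finset

lemma mul_rpow_sub_one_le_rpow_sub_rpow {q x : ℝ} (hq0 : 0 ≤ q) (hq1 : q ≤ 1) (hx : 0 ≤ x) :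
    q * (x + 1) ^ (q - 1) ≤ (x + 1) ^ q - x ^ q := by
  have hx1 : 0 < x + 1 := by linarith
  -- Bernoulli's inequality for `(1 - 1 / (x + 1)) ^ q`
  have key := rpow_one_add_le_one_add_mul_self
    (s := -1 / (x + 1)) (by rw [neg_div, neg_le_neg_iff, div_le_one hx1]; linarith) hq0 hq1
  rw [show 1 + -1 / (x + 1) = x / (x + 1) by field_simp; ring, div_rpow hx hx1.le,
    div_le_iff₀ (rpow_pos_of_pos hx1 q)] at key
  have hexpand : (1 + q * (-1 / (x + 1))) * (x + 1) ^ q = (x + 1) ^ q - q * ((x + 1) ^ q / (x + 1)) := by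
    ring
  rw [rpow_sub_one hx1.ne']
  linarith

lemma mul_sum_Icc_rpow_sub_one_le {q : ℝ} (hq0 : 0 ≤ q) (hq1 : q ≤ 1) (m : ℕ) :
    q * ∑ k ∈ Icc 1 m, (k : ℝ) ^ (q - 1) ≤ (m : ℝ) ^ q := by
  induction m with
  | zero => simpa using rpow_nonneg le_rfl q
  | succ m ih =>
    rw [sum_Icc_succ_top (by omega), mul_add]
    have hstep := mul_rpow_sub_one_le_rpow_sub_rpow hq0 hq1 m.cast_nonneg
    push_cast
    linarith

lemma sum_Icc_rpow_sub_one_le {q : ℝ} (hq0 : 0 < q) (hq1 : q ≤ 1) {m n : ℕ} (hmn : m ≤ n) :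
    ∑ k ∈ Icc 1 m, (k : ℝ) ^ (q - 1) ≤ q⁻¹ * (n : ℝ) ^ q := by
  rw [inv_mul_eq_div, le_div_iff₀ hq0, mul_comm]
  calc q * ∑ k ∈ Icc 1 m, (k : ℝ) ^ (q - 1) ≤ (m : ℝ) ^ q := mul_sum_Icc_rpow_sub_one_le hq0.le hq1 m
    _ ≤ (n : ℝ) ^ q := by gcongr

lemma sum_Icc_half_rpow_mul_rpow_le {β : ℝ} (hβ : 0 ≤ β) (s : ℝ) {n : ℕ} (hn : 0 < n) :
    ∑ k ∈ Icc 1 ((n + 1) / 2 - 1), (k : ℝ) ^ s * ((n : ℝ) - k + 1) ^ (-β)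
      ≤ 2 ^ β * (n : ℝ) ^ (-β) * ∑ k ∈ Icc 1 ((n + 1) / 2 - 1), (k : ℝ) ^ s := by
  have hn0 : (0 : ℝ) < n := by exact_mod_cast hn
  rw [mul_sum]
  refine sum_le_sum fun k hk => ?_
  have hkn : 2 * (k : ℝ) + 1 ≤ n := by
    rw [mem_Icc] at hk
    exact_mod_cast (by omega : 2 * k + 1 ≤ n)
  calc (k : ℝ) ^ s * ((n : ℝ) - k + 1) ^ (-β)
      ≤ (k : ℝ) ^ s * ((n : ℝ) / 2) ^ (-β) := by
        refine mul_le_mul_of_nonneg_left ?_ (by positivity)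
        exact rpow_le_rpow_of_nonpos (half_pos hn0) (by linarith) (by linarith)
    _ = 2 ^ β * (n : ℝ) ^ (-β) * (k : ℝ) ^ s := by
        rw [div_rpow hn0.le zero_le_two, rpow_neg zero_le_two, div_inv_eq_mul]
        ring

theorem L1_half_sum_bounds_general (α σ : ℝ) (hα0 : 0 < α) :
    ∃ C : ℝ, 0 < C ∧ ∀ n : ℕ, 2 ≤ n →
      ((0 < σ ∧ σ < 1 →
        ∑ k ∈ Finset.Icc 1 ((n + 1) / 2 - 1),
            (k : ℝ) ^ (σ - 2) * ((n : ℝ) - (k : ℝ) + 1) ^ (-α - 1)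
          ≤ C * (n : ℝ) ^ (-(1 + α))) ∧
      (1 < σ ∧ σ ≤ 2 →
        ∑ k ∈ Finset.Icc 1 ((n + 1) / 2 - 1),
            (k : ℝ) ^ (σ - 2) * ((n : ℝ) - (k : ℝ) + 1) ^ (-α - 1)
          ≤ C * (n : ℝ) ^ (-2 - α + σ))) := by
  set T := ∑' k : ℕ, (k : ℝ) ^ (σ - 2)
  set K := max T (σ - 1)⁻¹ + 1
  have hT : 0 ≤ T := tsum_nonneg fun k => rpow_nonneg k.cast_nonneg (σ - 2)
  have hTK : T ≤ K := by linarith [le_max_left T (σ - 1)⁻¹]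
  have hK : 0 < K := by linarith [le_max_left T (σ - 1)⁻¹]
  refine ⟨2 ^ (α + 1) * K, by positivity, fun n hn => ?_⟩
  have hn0 : (0 : ℝ) < n := by positivity
  have half := sum_Icc_half_rpow_mul_rpow_le (by linarith : 0 ≤ α + 1) (σ - 2) (by omega : 0 < n)
  rw [show -(α + 1) = -α - 1 by ring] at half
  set m := (n + 1) / 2 - 1
  refine ⟨fun ⟨_, hσ1⟩ => ?_, fun ⟨hσ1, hσ2⟩ => ?_⟩
  · have hS : ∑ k ∈ Icc 1 m, (k : ℝ) ^ (σ - 2) ≤ K :=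
      (Summable.sum_le_tsum _ (fun k _ => by positivity) (summable_nat_rpow.2 (by linarith))).trans hTK
    calc _ ≤ 2 ^ (α + 1) * (n : ℝ) ^ (-α - 1) * ∑ k ∈ Icc 1 m, (k : ℝ) ^ (σ - 2) := half
      _ ≤ 2 ^ (α + 1) * (n : ℝ) ^ (-α - 1) * K := by gcongr
      _ = _ := by rw [show -α - 1 = -(1 + α) by ring]; ring
  · have hS : ∑ k ∈ Icc 1 m, (k : ℝ) ^ (σ - 2) ≤ K * (n : ℝ) ^ (σ - 1) := by
      have h := sum_Icc_rpow_sub_one_le (q := σ - 1) (by linarith) (by linarith) (by omega : m ≤ n)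
      rw [show σ - 1 - 1 = σ - 2 by ring] at h
      exact h.trans (by gcongr; linarith [le_max_right T (σ - 1)⁻¹])
    calc _ ≤ 2 ^ (α + 1) * (n : ℝ) ^ (-α - 1) * ∑ k ∈ Icc 1 m, (k : ℝ) ^ (σ - 2) := half
      _ ≤ 2 ^ (α + 1) * (n : ℝ) ^ (-α - 1) * (K * (n : ℝ) ^ (σ - 1)) := by gcongr
      _ = _ := by rw [show -2 - α + σ = -α - 1 + (σ - 1) by ring, rpow_add hn0]; ring

theorem L1_half_sum_bounds (α σ : ℝ) (hα0 : 0 < α) (hα1 : α < 1) :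
    ∃ C : ℝ, 0 < C ∧ ∀ n : ℕ, 2 ≤ n →
      ((0 < σ ∧ σ < 1 →
        ∑ k ∈ Finset.Icc 1 ((n + 1) / 2 - 1),
            (k : ℝ) ^ (σ - 2) * ((n : ℝ) - (k : ℝ) + 1) ^ (-α - 1)
          ≤ C * (n : ℝ) ^ (-(1 + α))) ∧
      (1 < σ ∧ σ ≤ 2 →
        ∑ k ∈ Finset.Icc 1 ((n + 1) / 2 - 1),
            (k : ℝ) ^ (σ - 2) * ((n : ℝ) - (k : ℝ) + 1) ^ (-α - 1)
          ≤ C * (n : ℝ) ^ (-2 - α + σ))) :=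
  L1_half_sum_bounds_general α σ hα0
end
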